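/- Let k ≥ 3, and let C and C′ be two cycles, each of length 2k, such that E(C) ∩ E(C′) = ∅ and V(C) ∩ V(C′) ≠ ∅. If H = C ∪ C′ has girth at least 2k−2, then the edge set of H can be partitioned into two paths, each of length 2k. -/

import Mathlib

/-!
Let `x` be a common vertex. An edge `xa` of one cycle whose endpoint `a` lies on the other
cycle `E` closes each of the two arcs of `E` between `x` and `a` into a cycle; by the girth
bound both arcs have length at least `2k - 3`, and since they add up to `2k`, `a` sits at
distance exactly `3` from `x` along `E`. The two neighbours of `x` on a cycle cannot both do
that, as they would coincide; so, after reversing the cycles if necessary, the second vertex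
`a` of `C` avoids `C'` and the second vertex `b` of `C'` avoids `C`. The two paths are then
`C` from `a` round to `x`, followed by `xb`, and `C'` from `b` round to `x`, followed by `xa`.
-/

/-- The union of two walks' edge sets, as a simple graph on the same vertex type. -/
def unionGraph {V : Type*} {G : SimpleGraph V} {a b c d : V}
    (C : G.Walk a b) (P : G.Walk c d) : SimpleGraph V :=
  SimpleGraph.fromEdgeSet ({e | e ∈ C.edges} ∪ {e | e ∈ P.edges})

namespace SimpleGraph

variable {V : Type*} {G : SimpleGraph V}

def IsPartitionIntoTwoPaths (G : SimpleGraph V) (S : Set (Sym2 V)) (n : ℕ) : Prop :=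
  ∃ (a b a' b' : V) (Q₁ : G.Walk a b) (Q₂ : G.Walk a' b'),
    Q₁.IsPath ∧ Q₂.IsPath ∧ Q₁.length = n ∧ Q₂.length = n ∧
    (∀ e, e ∈ S ↔ e ∈ Q₁.edges ∨ e ∈ Q₂.edges) ∧ ∀ e ∈ Q₁.edges, e ∉ Q₂.edges

namespace Walk

lemma IsTrail.girth_le_length_add_one {u v : V} {p : G.Walk v u} (hp : p.IsTrail)
    (h : G.Adj u v) (he : s(u, v) ∉ p.edges) : G.girth ≤ p.length + 1 := by
  have hc : (cons h p).IsCircuit := ⟨(isTrail_cons ..).mpr ⟨hp, he⟩, by simp⟩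
  simpa using hc.girth_le_length

lemma IsTrail.getVert_three_eq_of_adj [DecidableEq V] {k : ℕ} (hk : 3 ≤ k) {x a : V}
    {E : G.Walk x x} (hE : E.IsTrail) (hlen : E.length = 2 * k) (hg : 2 * k - 2 ≤ G.girth)
    (hadj : G.Adj x a) (ha : a ∈ E.support) (he : s(x, a) ∉ E.edges) : E.getVert 3 = a := by
  have hfirst := (hE.takeUntil ha).reverse.girth_le_length_add_one hadj
    (by simpa using fun h => he (E.edges_takeUntil_subset_edges ha h))
  have hsecond := (hE.dropUntil ha).girth_le_length_add_one hadj
    (fun h => he (E.edges_dropUntil_subset_edges ha h))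
  have hsum := congrArg length (E.take_spec ha)
  rw [length_append] at hsum
  rw [length_reverse] at hfirst
  have h3 : (E.takeUntil a ha).length = 3 := by omega
  rw [← h3, getVert_length_takeUntil]

lemma IsCycle.snd_notMem_support_or_penultimate_notMem_support [DecidableEq V] {k : ℕ}
    (hk : 3 ≤ k) {x : V} {D E : G.Walk x x} (hD : D.IsCycle) (hE : E.IsTrail)
    (hlen : E.length = 2 * k) (hg : 2 * k - 2 ≤ G.girth) (hdisj : ∀ e ∈ D.edges, e ∉ E.edges) :
    D.snd ∉ E.support ∨ D.penultimate ∉ E.support := by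
  by_contra! h
  apply hD.snd_ne_penultimate
  rw [← hE.getVert_three_eq_of_adj hk hlen hg (D.adj_snd hD.not_nil) h.1
      (hdisj _ (D.mk_start_snd_mem_edges hD.not_nil)),
    hE.getVert_three_eq_of_adj hk hlen hg (D.adj_penultimate hD.not_nil).symm h.2
      (hdisj _ (Sym2.eq_swap ▸ D.mk_penultimate_end_mem_edges hD.not_nil))]

lemma edges_eq_cons_edges_tail {u v : V} {p : G.Walk u v} (hp : ¬ p.Nil) :
    p.edges = s(u, p.snd) :: p.tail.edges := by
  rw [edges_tail, mk_start_snd_eq_head_edges hp, List.cons_head_tail]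

lemma IsCycle.isPartitionIntoTwoPaths {n : ℕ} {x : V} {D D' : G.Walk x x} (hD : D.IsCycle)
    (hD' : D'.IsCycle) (hlen : D.length = n) (hlen' : D'.length = n)
    (hdisj : ∀ e ∈ D.edges, e ∉ D'.edges) (ha : D.snd ∉ D'.support) (hb : D'.snd ∉ D.support) :
    G.IsPartitionIntoTwoPaths {e | e ∈ D.edges ∨ e ∈ D'.edges} n := by
  set Q₁ := D.tail.concat (D'.adj_snd hD'.not_nil)
  set Q₂ := D'.tail.concat (D.adj_snd hD.not_nil)
  have hperm : (Q₁.edges ++ Q₂.edges).Perm (D.edges ++ D'.edges) := by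
    rw [edges_concat, edges_concat, edges_eq_cons_edges_tail hD.not_nil,
      edges_eq_cons_edges_tail hD'.not_nil]
    simpa using
      List.perm_append_singleton s(x, D.snd) (D.tail.edges ++ s(x, D'.snd) :: D'.tail.edges)
  have hnodup : (D.edges ++ D'.edges).Nodup :=
    List.nodup_append.mpr
      ⟨hD.edges_nodup, hD'.edges_nodup, fun e he _ he' h => hdisj e he (h ▸ he')⟩
  refine ⟨_, _, _, _, Q₁, Q₂, ?_, ?_, ?_, ?_, ?_, ?_⟩
  · refine hD.isPath_tail.concat (fun h => hb ?_) _
    exact List.mem_of_mem_tail (support_tail_of_not_nil D hD.not_nil ▸ h)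
  · refine hD'.isPath_tail.concat (fun h => ha ?_) _
    exact List.mem_of_mem_tail (support_tail_of_not_nil D' hD'.not_nil ▸ h)
  · rw [length_concat, length_tail_add_one hD.not_nil, hlen]
  · rw [length_concat, length_tail_add_one hD'.not_nil, hlen']
  · intro e
    simpa using (hperm.mem_iff (a := e)).symm
  · intro e he he'
    exact (List.nodup_append.mp (hperm.nodup_iff.mpr hnodup)).2.2 e he e he' rfl

lemma IsCycle.isPartitionIntoTwoPaths_of_two_mul_sub_two_le_girth [DecidableEq V] {k : ℕ}
    (hk : 3 ≤ k) {x : V} {D D' : G.Walk x x} (hD : D.IsCycle) (hD' : D'.IsCycle)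
    (hlen : D.length = 2 * k) (hlen' : D'.length = 2 * k) (hdisj : ∀ e ∈ D.edges, e ∉ D'.edges)
    (hg : 2 * k - 2 ≤ G.girth) :
    G.IsPartitionIntoTwoPaths {e | e ∈ D.edges ∨ e ∈ D'.edges} (2 * k) := by
  have ha := hD.snd_notMem_support_or_penultimate_notMem_support hk hD'.isTrail hlen' hg hdisj
  have hb := hD'.snd_notMem_support_or_penultimate_notMem_support hk hD.isTrail hlen hg
    fun e he' he => hdisj e he he'
  wlog ha' : D.snd ∉ D'.support generalizing D
  · simpa using this hD.reverse (by simpa) (by simpa) (by simpa [or_comm] using ha)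
      (by simpa using hb) (by simpa using ha.resolve_left ha')
  wlog hb' : D'.snd ∉ D.support generalizing D'
  · simpa using this hD'.reverse (by simpa) (by simpa) (by simpa using ha)
      (by simpa [or_comm] using hb) (by simpa using ha')
      (by simpa using hb.resolve_left hb')
  exact hD.isPartitionIntoTwoPaths hD' hlen hlen' hdisj ha' hb'

end Walk
end SimpleGraph

open SimpleGraph

lemma mem_edgeSet_unionGraph {V : Type*} {G : SimpleGraph V} {a b c d : V} (C : G.Walk a b)
    (P : G.Walk c d) {e : Sym2 V} : e ∈ (unionGraph C P).edgeSet ↔ e ∈ C.edges ∨ e ∈ P.edges := by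
  simp only [unionGraph, edgeSet_fromEdgeSet, Set.mem_sdiff, Set.mem_union, Set.mem_ofPred_eq,
    and_iff_left_iff_imp]
  rintro (h | h) <;> exact G.not_isDiag_of_mem_edgeSet (Walk.edges_subset_edgeSet _ h)

/-- Let `k ≥ 3`, and let `C`, `C'` be edge-disjoint cycles, each of
length `2k`, sharing at least one vertex.  If `H = C ∪ C'` has girth at least
`2k-2`, then the edge set of `H` partitions into two paths, each of length `2k`. -/
theorem stmt6 {V : Type*} (k : ℕ) (hk : 3 ≤ k) (G : SimpleGraph V)
    {c c' : V} (C : G.Walk c c) (C' : G.Walk c' c')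
    (hC : C.IsCycle) (hClen : C.length = 2 * k)
    (hC' : C'.IsCycle) (hC'len : C'.length = 2 * k)
    (hdisj : ∀ e ∈ C.edges, e ∉ C'.edges)
    (hshare : ∃ x, x ∈ C.support ∧ x ∈ C'.support)
    (hgirth : ((2 * k - 2 : ℕ) : ℕ∞) ≤ (unionGraph C C').girth) :
    ∃ (a b a' b' : V) (Q₁ : (unionGraph C C').Walk a b) (Q₂ : (unionGraph C C').Walk a' b'),
      Q₁.IsPath ∧ Q₂.IsPath ∧
      Q₁.length = 2 * k ∧ Q₂.length = 2 * k ∧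
      (∀ e, e ∈ (unionGraph C C').edgeSet ↔ (e ∈ Q₁.edges ∨ e ∈ Q₂.edges)) ∧
      (∀ e ∈ Q₁.edges, e ∉ Q₂.edges) := by
  classical
  obtain ⟨x, hxC, hxC'⟩ := hshare
  have hsub : ∀ e ∈ C.edges, e ∈ (unionGraph C C').edgeSet :=
    fun _ he => (mem_edgeSet_unionGraph C C').2 (.inl he)
  have hsub' : ∀ e ∈ C'.edges, e ∈ (unionGraph C C').edgeSet :=
    fun _ he => (mem_edgeSet_unionGraph C C').2 (.inr he)
  set D := (C.transfer _ hsub).rotate x (by simpa using hxC)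
  set D' := (C'.transfer _ hsub').rotate x (by simpa using hxC')
  have hDe (e : Sym2 V) : e ∈ D.edges ↔ e ∈ C.edges := by
    simpa using (Walk.rotate_edges (C.transfer _ hsub) x _).mem_iff
  have hD'e (e : Sym2 V) : e ∈ D'.edges ↔ e ∈ C'.edges := by
    simpa using (Walk.rotate_edges (C'.transfer _ hsub') x _).mem_iff
  have hpart := ((hC.transfer hsub).rotate _).isPartitionIntoTwoPaths_of_two_mul_sub_two_le_girth
    hk ((hC'.transfer hsub').rotate _) (by simpa [D] using hClen) (by simpa [D'] using hC'len)
    (fun e he he' => hdisj e ((hDe e).1 he) ((hD'e e).1 he')) (by exact_mod_cast hgirth)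
  have hunion : {e | e ∈ D.edges ∨ e ∈ D'.edges} = (unionGraph C C').edgeSet := by
    ext e
    simp [hDe, hD'e, mem_edgeSet_unionGraph]
  rwa [hunion] at hpart
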